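/- Let N, M, K be positive natural numbers, W : Fin M × Fin K → ℝ a weight matrix, and X : Fin N × Fin K → ℝ an input matrix. Define the Wanda score S^W(i, j) = |W_{ij}| · ‖X_{:,j}‖₂ (where ‖X_{:,j}‖₂ is the Euclidean norm of the j-th column of X) and the S-OBD saliency with diagonal Hessian S^O(i, j) = ½ · W_{ij}² · (‖X_{:,j}‖₂² / N). Then for all indices (i, j): S^O(i, j) = S^W(i, j)² / (2N); and for all pairs of indices (i, j) and (i′, j′): S^O(i, j) ≤ S^O(i′, j′) if and only if S^W(i, j) ≤ S^W(i′, j′). In particular the two criteria induce the same ranking of matrix elements. -/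
import Mathlib


/-- Wanda is equivalent to S-OBD with a diagonal Hessian: with
`S^W(i,j) = |W i j| · ‖X_{:,j}‖₂` and `S^O(i,j) = ½ · (W i j)² · (‖X_{:,j}‖₂² / N)`,
one has `S^O(i,j) = S^W(i,j)² / (2N)`, and the two criteria induce the same
ranking of matrix elements. -/
theorem wanda_equiv_diagonal_obd (N M K : ℕ) (hN : 0 < N) (hM : 0 < M) (hK : 0 < K)
    (W : Fin M × Fin K → ℝ) (X : Fin N × Fin K → ℝ)
    (SW SO : Fin M → Fin K → ℝ)
    (hSW : ∀ i j, SW i j = |W (i, j)| * Real.sqrt (∑ a, (X (a, j)) ^ 2))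
    (hSO : ∀ i j, SO i j = (1 / 2) * (W (i, j)) ^ 2 * ((∑ a, (X (a, j)) ^ 2) / N)) :
    (∀ i j, SO i j = (SW i j) ^ 2 / (2 * N)) ∧
    (∀ i j i' j', SO i j ≤ SO i' j' ↔ SW i j ≤ SW i' j') := by
  have key : ∀ i j, SO i j = (SW i j) ^ 2 / (2 * N) := by
    intro i j
    have hnn : (0:ℝ) ≤ ∑ a, (X (a, j)) ^ 2 :=
      Finset.sum_nonneg fun a _ => sq_nonneg _
    rw [hSO, hSW, mul_pow, sq_abs, Real.sq_sqrt hnn]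
    ring
  have hnonneg : ∀ i j, 0 ≤ SW i j := by
    intro i j
    rw [hSW]
    exact mul_nonneg (abs_nonneg _) (Real.sqrt_nonneg _)
  refine ⟨key, fun i j i' j' => ?_⟩
  rw [key, key]
  have h2N : (0:ℝ) < 2 * N := by positivity
  rw [div_le_div_iff_of_pos_right h2N]
  exact pow_le_pow_iff_left₀ (hnonneg i j) (hnonneg i' j') two_ne_zero
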